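/- Let n ≥ 1 and let G be an infinite discrete subgroup of PU(1,n). Then the union 𝒞(G) = ⋃_{p ∈ Λ_CG(G)} 𝓗_p of all complex projective hyperplanes tangent to ∂𝐇ⁿ_ℂ at points of the Chen–Greenberg limit set is a closed G-invariant subset of ℙⁿ_ℂ. -/

import Mathlib

open Filter Topology Matrix

noncomputable section

abbrev Vec (n : ℕ) := Fin (n + 1) → ℂ
abbrev Mat (n : ℕ) := Matrix (Fin (n + 1)) (Fin (n + 1)) ℂ
abbrev Pn (n : ℕ) := Projectivization ℂ (Vec n)

instance (n : ℕ) : TopologicalSpace (Pn n) :=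
  inferInstanceAs (TopologicalSpace (Quotient (projectivizationSetoid ℂ (Vec n))))

def herm (n : ℕ) (u v : Vec n) : ℂ :=
  -(u 0 * (starRingEnd ℂ) (v 0)) + ∑ j : Fin n, u j.succ * (starRingEnd ℂ) (v j.succ)

def Hball (n : ℕ) : Set (Pn n) :=
  {p | ∃ v : Vec n, ∃ hv : v ≠ 0, p = Projectivization.mk ℂ v hv ∧ (herm n v v).re < 0}

def Hbdry (n : ℕ) : Set (Pn n) :=
  {p | ∃ v : Vec n, ∃ hv : v ≠ 0, p = Projectivization.mk ℂ v hv ∧ herm n v v = 0}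

abbrev GLn (n : ℕ) := Matrix.GeneralLinearGroup (Fin (n + 1)) ℂ
abbrev PGLn (n : ℕ) := GLn n ⧸ Subgroup.center (GLn n)

lemma glInj {n : ℕ} (A : GLn n) : Function.Injective (Matrix.mulVecLin (A : Mat n)) := by
  intro x y h
  simp only [Matrix.mulVecLin_apply] at h
  have h2 : ((A⁻¹ : GLn n) : Mat n) *ᵥ ((A : Mat n) *ᵥ x)
      = ((A⁻¹ : GLn n) : Mat n) *ᵥ ((A : Mat n) *ᵥ y) := by rw [h]
  rwa [Matrix.mulVec_mulVec, Matrix.mulVec_mulVec, Units.inv_mul, Matrix.one_mulVec,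
    Matrix.one_mulVec] at h2

def actGL {n : ℕ} (A : GLn n) : Pn n → Pn n :=
  Projectivization.map (Matrix.mulVecLin (A : Mat n)) (glInj A)

def act {n : ℕ} (g : PGLn n) : Pn n → Pn n := actGL (Quotient.out g)

-- part 2 --

/-- The subset `U(1,n)` of `GL(n+1,ℂ)`: matrices preserving the Hermitian form. -/
def unitaryGL (n : ℕ) : Set (GLn n) :=
  {A | ∀ u v : Vec n, herm n ((A : Mat n) *ᵥ u) ((A : Mat n) *ᵥ v) = herm n u v}

/-- `PU(1,n)`, the image of `U(1,n)` in `PGL(n+1,ℂ)`. -/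
def PUset (n : ℕ) : Set (PGLn n) := (QuotientGroup.mk : GLn n → PGLn n) '' unitaryGL n

/-- The center of the ball `𝐇ⁿ_ℂ`, namely the image of `(1,0,…,0)`. -/
def basePt (n : ℕ) : Pn n :=
  Projectivization.mk ℂ (Pi.single 0 1) (by
    intro h
    have := congrFun h 0
    simp [Pi.single_eq_same] at this)

lemma basePt_mem_Hball (n : ℕ) : basePt n ∈ Hball n := by
  refine ⟨Pi.single 0 1, _, rfl, ?_⟩
  have : herm n (Pi.single 0 1) (Pi.single 0 1) = -1 := by
    simp [herm, Pi.single_eq_same, Pi.single_eq_of_ne (Fin.succ_ne_zero _)]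
  rw [this]
  norm_num

/-- The set of accumulation points of the orbit `G • x` in `ℙⁿ_ℂ`: limits of
`g_m • x` along sequences of pairwise distinct elements of `G`. -/
def accPts {n : ℕ} (G : Subgroup (PGLn n)) (x : Pn n) : Set (Pn n) :=
  {z | ∃ g : ℕ → G, Function.Injective g ∧
    Tendsto (fun m => act (g m : PGLn n) x) atTop (𝓝 z)}

/-- The Chen–Greenberg limit set of `G`. -/
def LambdaCG {n : ℕ} (G : Subgroup (PGLn n)) : Set (Pn n) := accPts G (basePt n)

/-- Uniform convergence on `K` of a sequence of self-maps of `ℙⁿ_ℂ` to `F`, expressed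
via open neighborhoods of the diagonal.  Since `ℙⁿ_ℂ` is compact Hausdorff, this is
equivalent to uniform convergence on `K` with respect to any metric inducing its
topology. -/
def UnifConvOn {n : ℕ} (f : ℕ → Pn n → Pn n) (F : Pn n → Pn n) (K : Set (Pn n)) : Prop :=
  ∀ W : Set (Pn n × Pn n), IsOpen W → (∀ y, (y, y) ∈ W) →
    ∀ᶠ m in atTop, ∀ x ∈ K, (F x, f m x) ∈ W

/-- Uniform convergence on all compact subsets of `S`. -/
def UnifConvOnCompacts {n : ℕ} (f : ℕ → Pn n → Pn n) (F : Pn n → Pn n)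
    (S : Set (Pn n)) : Prop :=
  ∀ K ⊆ S, IsCompact K → UnifConvOn f F K

/-- The equicontinuity region of a subgroup `G ≤ PGL(n+1,ℂ)`: points having an open
neighborhood `U` on which every sequence in `G` has a subsequence converging uniformly
on compact subsets of `U`. -/
def eqRegion {n : ℕ} (G : Subgroup (PGLn n)) : Set (Pn n) :=
  {z | ∃ U : Set (Pn n), IsOpen U ∧ z ∈ U ∧
    ∀ g : ℕ → G, ∃ φ : ℕ → ℕ, StrictMono φ ∧ ∃ F : Pn n → Pn n,
      UnifConvOnCompacts (fun m => act (g (φ m) : PGLn n)) F U}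

/-- The equicontinuity region of the family of maps `{f m : m ∈ ℕ}`. -/
def eqRegionFam {n : ℕ} (f : ℕ → Pn n → Pn n) : Set (Pn n) :=
  {z | ∃ U : Set (Pn n), IsOpen U ∧ z ∈ U ∧
    ∀ s : ℕ → ℕ, ∃ φ : ℕ → ℕ, StrictMono φ ∧ ∃ F : Pn n → Pn n,
      UnifConvOnCompacts (fun k => f (s (φ k))) F U}

/-- The projectivization of a linear subspace `W ⊆ ℂ^{n+1}`, as a subset of `ℙⁿ_ℂ`. -/
def projSet {n : ℕ} (W : Submodule ℂ (Vec n)) : Set (Pn n) := {p | p.rep ∈ W}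

/-- A complex projective hyperplane: the projectivization of an `n`-dimensional
subspace of `ℂ^{n+1}`. -/
def IsProjHyperplane {n : ℕ} (S : Set (Pn n)) : Prop :=
  ∃ W : Submodule ℂ (Vec n), Module.finrank ℂ W = n ∧ S = projSet W

/-- A complex projective line: the projectivization of a `2`-dimensional subspace. -/
def IsProjLine {n : ℕ} (S : Set (Pn n)) : Prop :=
  ∃ W : Submodule ℂ (Vec n), Module.finrank ℂ W = 2 ∧ S = projSet W

/-- The kernel in `ℙⁿ_ℂ` of the quasi-projective map induced by the nonzero matrix `M`. -/
def qKer {n : ℕ} (M : Mat n) : Set (Pn n) := projSet (LinearMap.ker (Matrix.mulVecLin M))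

/-- The image in `ℙⁿ_ℂ` of the quasi-projective map induced by the nonzero matrix `M`. -/
def qIm {n : ℕ} (M : Mat n) : Set (Pn n) := projSet (LinearMap.range (Matrix.mulVecLin M))

/-- The quasi-projective map `ℙⁿ_ℂ ∖ Ker(M) → ℙⁿ_ℂ` induced by the nonzero matrix `M`
(extended to all of `ℙⁿ_ℂ` by the identity on `Ker(M)`, where it is irrelevant). -/
def qMap {n : ℕ} (M : Mat n) : Pn n → Pn n := fun p =>
  if h : M *ᵥ p.rep ≠ 0 then Projectivization.mk ℂ (M *ᵥ p.rep) h else p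

/-- Convergence of a sequence of transformations of `ℙⁿ_ℂ` to the quasi-projective map
induced by `M`, in the sense of quasi-projective transformations: uniform convergence
on compact subsets of `ℙⁿ_ℂ ∖ Ker(M)`. -/
def QPConv {n : ℕ} (f : ℕ → Pn n → Pn n) (M : Mat n) : Prop :=
  UnifConvOnCompacts f (qMap M) (qKer M)ᶜ

/-- The special linear group `SL(n+1,ℂ)`. -/
abbrev SLn (n : ℕ) := Matrix.SpecialLinearGroup (Fin (n + 1)) ℂ

/-- The projective special linear group `PSL(n+1,ℂ) = SL(n+1,ℂ)/center`. -/
abbrev PSLn (n : ℕ) := SLn n ⧸ Subgroup.center (SLn n)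

/-- The projective transformation induced by an element of `SL(n+1,ℂ)`. -/
def actSL {n : ℕ} (A : SLn n) : Pn n → Pn n := actGL (Matrix.SpecialLinearGroup.toGL A)

/-- The projective transformation induced by an element of `PSL(n+1,ℂ)` (via an
arbitrary representative; all representatives induce the same transformation). -/
def actPSL {n : ℕ} (g : PSLn n) : Pn n → Pn n := actSL (Quotient.out g)

/-- The projective hyperplane tangent to `∂𝐇ⁿ_ℂ` at `p`: the projectivization of the
Hermitian orthogonal complement of a lift of `p`. -/
def tangentAt {n : ℕ} (p : Pn n) : Set (Pn n) := {q | herm n q.rep p.rep = 0}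

end

/-!
The Chen–Greenberg limit set is the set of cluster points of the orbit map `g ↦ g • x` along the
cofinite filter of `G`, hence closed. The union of the tangent hyperplanes over a closed set `Λ`
is the projection to the first factor of the closed incidence set `{(q, p) | ⟨q, p⟩ = 0}` cut
down to `ℙⁿ × Λ`, so it is closed because `ℙⁿ` is compact. A matrix `B ∈ U(1,n)` maps the
tangent hyperplane at `p` onto the one at `B • p`, and every element of `G` is represented by such
a matrix and preserves the limit set, which gives invariance.
-/

open Projectivization Pointwise

section Herm

variable {n : ℕ}

lemma herm_smul_smul (a b : ℂ) (u v : Vec n) :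
    herm n (a • u) (b • v) = a * starRingEnd ℂ b * herm n u v := by
  simp only [herm, Pi.smul_apply, smul_eq_mul, map_mul, mul_add, Finset.mul_sum, mul_neg]
  congr 1
  · ring
  · exact Finset.sum_congr rfl fun j _ => by ring

lemma continuous_herm : Continuous fun vw : Vec n × Vec n => herm n vw.1 vw.2 := by
  unfold herm
  fun_prop

lemma mk_mem_tangentAt_mk_iff {v w : Vec n} (hv : v ≠ 0) (hw : w ≠ 0) :
    mk ℂ v hv ∈ tangentAt (mk ℂ w hw) ↔ herm n v w = 0 := by
  obtain ⟨a, ha⟩ := exists_smul_eq_mk_rep ℂ v hv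
  obtain ⟨b, hb⟩ := exists_smul_eq_mk_rep ℂ w hw
  change herm n (mk ℂ v hv).rep (mk ℂ w hw).rep = 0 ↔ _
  simp only [← ha, ← hb, Units.smul_def, herm_smul_smul, mul_eq_zero, Units.ne_zero,
    map_eq_zero, false_or]

end Herm

section Topology

variable {n : ℕ}

lemma isQuotientMap_mk' : IsQuotientMap (mk' ℂ : {v : Vec n // v ≠ 0} → Pn n) :=
  isQuotientMap_quotient_mk'

lemma isOpenMap_mk' : IsOpenMap (mk' ℂ : {v : Vec n // v ≠ 0} → Pn n) := by
  intro U hU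
  rw [← isQuotientMap_mk'.isOpen_preimage]
  have hsat : (mk' ℂ : {v : Vec n // v ≠ 0} → Pn n) ⁻¹' (mk' ℂ '' U) =
      ⋃ c : ℂˣ, (fun w : {v : Vec n // v ≠ 0} => (⟨c • w.1, (smul_ne_zero_iff_ne c).mpr w.2⟩ :
        {v : Vec n // v ≠ 0})) ⁻¹' U := by
    ext w
    simp only [Set.mem_preimage, Set.mem_image, Set.mem_iUnion, mk'_eq_mk, mk_eq_mk_iff]
    constructor
    · rintro ⟨v, hvU, c, hc⟩
      exact ⟨c, by convert hvU⟩
    · rintro ⟨c, hc⟩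
      exact ⟨_, hc, c, rfl⟩
  rw [hsat]
  exact isOpen_iUnion fun c => hU.preimage (by fun_prop)

lemma isOpenQuotientMap_mk' : IsOpenQuotientMap (mk' ℂ : {v : Vec n // v ≠ 0} → Pn n) :=
  ⟨isQuotientMap_mk'.surjective, isQuotientMap_mk'.continuous, isOpenMap_mk'⟩

instance : SecondCountableTopology (Pn n) :=
  isQuotientMap_mk'.secondCountableTopology isOpenMap_mk'

instance : CompactSpace (Pn n) := by
  let f : Metric.sphere (0 : Vec n) 1 → Pn n := fun v => mk ℂ v (ne_zero_of_mem_unit_sphere v)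
  refine Function.Surjective.compactSpace (f := f) ?_ (fun p => ?_)
  · exact isQuotientMap_mk'.continuous.comp (by fun_prop)
  · induction p using Projectivization.ind with
    | h v hv =>
      refine ⟨⟨(‖v‖ : ℂ)⁻¹ • v, mem_sphere_zero_iff_norm.mpr (norm_smul_inv_norm hv)⟩, ?_⟩
      exact (mk_eq_mk_iff' ℂ _ _ _ hv).mpr ⟨(‖v‖ : ℂ)⁻¹, rfl⟩

end Topology

section Incidence

variable {n : ℕ}

lemma isClosed_setOf_mem_tangentAt :
    IsClosed {qp : Pn n × Pn n | qp.1 ∈ tangentAt qp.2} := by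
  have hq := (isOpenQuotientMap_mk' (n := n)).prodMap (isOpenQuotientMap_mk' (n := n))
  rw [← hq.isQuotientMap.isClosed_preimage]
  have hpre : Prod.map (mk' ℂ) (mk' ℂ) ⁻¹' {qp : Pn n × Pn n | qp.1 ∈ tangentAt qp.2} =
      {vw : {v : Vec n // v ≠ 0} × {v : Vec n // v ≠ 0} | herm n vw.1 vw.2 = 0} := by
    ext ⟨v, w⟩
    exact mk_mem_tangentAt_mk_iff v.2 w.2
  rw [hpre]
  exact isClosed_eq (continuous_herm.comp (continuous_subtype_val.prodMap continuous_subtype_val))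
    continuous_const

lemma isClosed_biUnion_tangentAt {Λ : Set (Pn n)} (hΛ : IsClosed Λ) :
    IsClosed (⋃ p ∈ Λ, tangentAt p) := by
  have hunion : (⋃ p ∈ Λ, tangentAt p) =
      Prod.fst '' ({qp : Pn n × Pn n | qp.1 ∈ tangentAt qp.2} ∩ Prod.snd ⁻¹' Λ) := by
    ext q
    simp only [Set.mem_iUnion, Set.mem_image, Set.mem_inter_iff, Set.mem_preimage, Prod.exists,
      exists_and_right, exists_eq_right]
    exact ⟨fun ⟨p, hp, hq⟩ => ⟨p, hq, hp⟩, fun ⟨p, hq, hp⟩ => ⟨p, hp, hq⟩⟩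
  rw [hunion]
  exact isClosedMap_fst_of_compactSpace _
    (isClosed_setOf_mem_tangentAt.inter (hΛ.preimage continuous_snd))

end Incidence

section Action

variable {n : ℕ}

instance : ContinuousConstSMul (GLn n) (Pn n) where
  continuous_const_smul A := by
    have hA : Continuous fun v : Vec n => A • v :=
      (mulVecLin (A : Mat n)).continuous_of_finiteDimensional
    rw [isQuotientMap_mk'.continuous_iff]
    exact isQuotientMap_mk'.continuous.comp
      ((hA.comp continuous_subtype_val).subtype_mk
        fun v => (smul_ne_zero_iff_ne A).mpr v.2)

lemma smul_eq_self_of_mem_center {z : GLn n} (hz : z ∈ Subgroup.center (GLn n)) (p : Pn n) :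
    z • p = p := by
  obtain ⟨a, ha⟩ := GeneralLinearGroup.mem_center_iff_val_mem_range_scalar.mp hz
  induction p using Projectivization.ind with
  | h v hv =>
    rw [smul_mk, mk_eq_mk_iff']
    refine ⟨a, ?_⟩
    change a • v = (z : Mat n) *ᵥ v
    ext i
    simp [← ha, scalar_apply, mulVec_diagonal]

lemma act_mk (A : GLn n) : act (QuotientGroup.mk A : PGLn n) = (A • ·) := by
  obtain ⟨⟨z, hz⟩, hAz⟩ := QuotientGroup.mk_out_eq_mul (Subgroup.center (GLn n)) A
  funext p
  change Quotient.out (QuotientGroup.mk A : PGLn n) • p = A • p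
  rw [hAz, mul_smul, smul_eq_self_of_mem_center hz]

lemma act_one (p : Pn n) : act (1 : PGLn n) p = p := by
  rw [← QuotientGroup.mk_one, act_mk]
  exact one_smul _ p

lemma act_mul (g h : PGLn n) (p : Pn n) : act (g * h) p = act g (act h p) := by
  induction g using QuotientGroup.induction_on with
  | H A =>
  induction h using QuotientGroup.induction_on with
  | H B =>
    rw [← QuotientGroup.mk_mul, act_mk, act_mk, act_mk]
    exact mul_smul A B p

lemma continuous_act (g : PGLn n) : Continuous (act g) :=
  continuous_const_smul (Quotient.out g)

lemma smul_mem_tangentAt_smul_iff {B : GLn n} (hB : B ∈ unitaryGL n) (p q : Pn n) :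
    B • q ∈ tangentAt (B • p) ↔ q ∈ tangentAt p := by
  induction p using Projectivization.ind with
  | h w hw =>
  induction q using Projectivization.ind with
  | h v hv =>
    rw [smul_mk, smul_mk, mk_mem_tangentAt_mk_iff, mk_mem_tangentAt_mk_iff]
    exact iff_of_eq (congrArg (· = 0) (hB v w))

lemma smul_tangentAt {B : GLn n} (hB : B ∈ unitaryGL n) (p : Pn n) :
    B • tangentAt p = tangentAt (B • p) := by
  ext q
  rw [Set.mem_smul_set_iff_inv_smul_mem, ← smul_mem_tangentAt_smul_iff hB, smul_inv_smul]

lemma smul_biUnion_tangentAt {B : GLn n} (hB : B ∈ unitaryGL n) (Λ : Set (Pn n)) :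
    B • ⋃ p ∈ Λ, tangentAt p = ⋃ p ∈ B • Λ, tangentAt p := by
  rw [Set.smul_set_iUnion₂, ← Set.image_smul, Set.biUnion_image]
  simp only [smul_tangentAt hB]

end Action

section ClusterPt

variable {ι X : Type*} [TopologicalSpace X]

theorem mapClusterPt_cofinite_of_injective_tendsto {f : ι → X} {z : X} {g : ℕ → ι}
    (hg : Function.Injective g) (hfg : Tendsto (f ∘ g) atTop (𝓝 z)) :
    MapClusterPt z cofinite f :=
  hfg.mapClusterPt.of_comp (Nat.cofinite_eq_atTop ▸ hg.tendsto_cofinite)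

theorem exists_injective_tendsto_of_mapClusterPt_cofinite [FirstCountableTopology X]
    {f : ι → X} {z : X} (h : MapClusterPt z cofinite f) :
    ∃ g : ℕ → ι, Function.Injective g ∧ Tendsto (f ∘ g) atTop (𝓝 z) := by
  classical
  obtain ⟨s, hs⟩ := (𝓝 z).exists_antitone_basis
  have hinf : ∀ k, {i | f i ∈ s k}.Infinite := fun k =>
    frequently_cofinite_iff_infinite.mp (mapClusterPt_iff_frequently.mp h _ (hs.mem k))
  -- pairs `(k, i)` with `f i ∈ s k`: increasing `k` gives convergence, distinct `i` injectivity
  obtain ⟨u, hu, hrel⟩ := exists_seq_of_forall_finset_exists (fun ki : ℕ × ι => f ki.2 ∈ s ki.1)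
    (fun ki lj => ki.1 < lj.1 ∧ ki.2 ≠ lj.2) fun S _ => by
      obtain ⟨i, hi, hiS⟩ := (hinf (S.sup Prod.fst + 1)).exists_notMem_finset (S.image Prod.snd)
      refine ⟨(S.sup Prod.fst + 1, i), hi, fun ki hki => ⟨Nat.lt_succ_of_le (S.le_sup hki), ?_⟩⟩
      rintro rfl
      exact hiS (Finset.mem_image_of_mem _ hki)
  have hmono : StrictMono fun m => (u m).1 := fun m m' h => (hrel m m' h).1
  refine ⟨fun m => (u m).2, .of_lt_imp_ne fun m m' h => (hrel m m' h).2, hs.tendsto fun m => ?_⟩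
  exact hs.antitone hmono.le_apply (hu m)

theorem mapClusterPt_cofinite_iff_exists_injective_tendsto [FirstCountableTopology X]
    {f : ι → X} {z : X} :
    MapClusterPt z cofinite f ↔ ∃ g : ℕ → ι, Function.Injective g ∧ Tendsto (f ∘ g) atTop (𝓝 z) :=
  ⟨exists_injective_tendsto_of_mapClusterPt_cofinite,
    fun ⟨_, hg, hfg⟩ => mapClusterPt_cofinite_of_injective_tendsto hg hfg⟩

end ClusterPt

section LimitSet

variable {n : ℕ} (G : Subgroup (PGLn n)) (x : Pn n)

lemma accPts_eq_setOf_mapClusterPt :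
    accPts G x = {z | MapClusterPt z cofinite fun g : G => act (g : PGLn n) x} := by
  ext z
  exact (mapClusterPt_cofinite_iff_exists_injective_tendsto
    (f := fun g : G => act (g : PGLn n) x) (z := z)).symm

lemma isClosed_accPts : IsClosed (accPts G x) := by
  rw [accPts_eq_setOf_mapClusterPt]
  exact isClosed_setOfPred_clusterPt

variable {G x}

lemma act_mem_accPts (g : G) {z : Pn n} (hz : z ∈ accPts G x) :
    act (g : PGLn n) z ∈ accPts G x := by
  obtain ⟨u, hu, hut⟩ := hz
  refine ⟨fun m => g * u m, fun a b hab => hu (mul_left_cancel hab), ?_⟩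
  simpa only [Subgroup.coe_mul, act_mul, Function.comp_def] using
    ((continuous_act _).tendsto z).comp hut

lemma act_image_accPts (g : G) : act (g : PGLn n) '' accPts G x = accPts G x := by
  refine Set.Subset.antisymm ?_ fun z hz => ⟨act ((g⁻¹ : G) : PGLn n) z, act_mem_accPts g⁻¹ hz, ?_⟩
  · rintro _ ⟨z, hz, rfl⟩
    exact act_mem_accPts g hz
  · rw [← act_mul, Subgroup.coe_inv, mul_inv_cancel, act_one]

end LimitSet

theorem union_tangent_hyperplanes_closed_invariant_general
    (n : ℕ) (G : Subgroup (PGLn n))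
    (hPU : (G : Set (PGLn n)) ⊆ PUset n) :
    IsClosed (⋃ p ∈ LambdaCG G, tangentAt p) ∧
    ∀ g : G, act (g : PGLn n) '' (⋃ p ∈ LambdaCG G, tangentAt p)
      = ⋃ p ∈ LambdaCG G, tangentAt p := by
  refine ⟨isClosed_biUnion_tangentAt (isClosed_accPts G _), fun g => ?_⟩
  obtain ⟨B, hB, hBg⟩ := hPU g.2
  have hact : act (g : PGLn n) = (B • ·) := hBg ▸ act_mk B
  have hΛ : B • LambdaCG G = LambdaCG G := by
    rw [← Set.image_smul, ← hact]
    exact act_image_accPts g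
  rw [hact, Set.image_smul, smul_biUnion_tangentAt hB, hΛ]

/-- For an infinite discrete subgroup `G` of `PU(1,n)`, the union of
all complex projective hyperplanes tangent to `∂𝐇ⁿ_ℂ` at points of the Chen–Greenberg
limit set is a closed `G`-invariant subset of `ℙⁿ_ℂ`. -/
theorem union_tangent_hyperplanes_closed_invariant
    (n : ℕ) (hn : 1 ≤ n) (G : Subgroup (PGLn n))
    (hPU : (G : Set (PGLn n)) ⊆ PUset n) (hdisc : DiscreteTopology ↥G)
    (hinf : (G : Set (PGLn n)).Infinite) :
    IsClosed (⋃ p ∈ LambdaCG G, tangentAt p) ∧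
    ∀ g : G, act (g : PGLn n) '' (⋃ p ∈ LambdaCG G, tangentAt p)
      = ⋃ p ∈ LambdaCG G, tangentAt p :=
  union_tangent_hyperplanes_closed_invariant_general n G hPU
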